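/- arXiv:1704.08796 — 3 statements merged into one kernel-verified Lean document; each statement's English description precedes it below -/
import Mathlib

section
/- Let H be a simple bipartite matching covered graph, let Q be a 4-cycle of H, and let e and f be two nonadjacent (opposite) edges of Q. If f is admissible in H − e, then e is removable in H. -/
/-! Preamble: definitions for matching covered graphs, bricks, removable
doubletons, R-compatible/R-thin edges, retracts, ladders, partial biwheels,
R-configurations, and the eleven infinite families. -/

/-- The graph has a perfect matching. -/
def HasPerfMatching {V : Type*} (G : SimpleGraph V) : Prop :=
  ∃ M : G.Subgraph, M.IsPerfectMatching

/-- A graph (with at least two vertices) is matching covered if it is connected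
and each of its edges lies in some perfect matching. -/
def MatchingCovered {V : Type*} (G : SimpleGraph V) : Prop :=
  2 ≤ Nat.card V ∧ G.Connected ∧
    ∀ e ∈ G.edgeSet, ∃ M : G.Subgraph, M.IsPerfectMatching ∧ e ∈ M.edgeSet

/-- An edge of a matching covered graph is removable if deleting it leaves a
matching covered graph. -/
def RemovableEdge {V : Type*} (G : SimpleGraph V) (e : Sym2 V) : Prop :=
  e ∈ G.edgeSet ∧ MatchingCovered (G.deleteEdges {e})

/-- The number of odd connected components. -/
noncomputable def oddCompCount {V : Type*} (G : SimpleGraph V) : ℕ :=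
  Nat.card {c : G.ConnectedComponent // Odd (Nat.card c.supp)}

/-- `S` is a barrier of `G`: `S` is nonempty and the number of odd components
of `G − S` equals `|S|`. -/
def IsBarrierOf {V : Type*} (G : SimpleGraph V) (S : Set V) : Prop :=
  S.Nonempty ∧ oddCompCount (G.induce (Sᶜ : Set V)) = S.ncard

/-- Bicritical: at least four vertices, and deleting any two distinct vertices
leaves a graph with a perfect matching. -/
def BicriticalGraph {V : Type*} (G : SimpleGraph V) : Prop :=
  4 ≤ Nat.card V ∧ ∀ u v : V, u ≠ v →
    HasPerfMatching (G.induce (({u, v} : Set V)ᶜ))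

/-- 3-connected: at least four vertices, and deleting any set of at most two
vertices leaves a connected graph. -/
def ThreeConnectedGraph {V : Type*} (G : SimpleGraph V) : Prop :=
  4 ≤ Nat.card V ∧ ∀ S : Set V, S.ncard ≤ 2 → (G.induce (Sᶜ : Set V)).Connected

/-- A brick is a 3-connected bicritical graph. -/
def BrickGraph {V : Type*} (G : SimpleGraph V) : Prop :=
  ThreeConnectedGraph G ∧ BicriticalGraph G

/-- `A`, `B` form a bipartition of `G`. -/
def BipartitionOf {V : Type*} (G : SimpleGraph V) (A B : Set V) : Prop :=
  A ∪ B = Set.univ ∧ Disjoint A B ∧ ∀ ⦃u v : V⦄, G.Adj u v → (u ∈ A ↔ v ∈ B)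

/-- `G` is bipartite. -/
def BipartiteGraph {V : Type*} (G : SimpleGraph V) : Prop :=
  ∃ A B : Set V, BipartitionOf G A B

/-- `{α, β}` is a removable doubleton of `G`: a pair of distinct edges whose
deletion leaves a bipartite matching covered graph. -/
def RemovableDoubleton {V : Type*} (G : SimpleGraph V) (α β : Sym2 V) : Prop :=
  α ≠ β ∧ α ∈ G.edgeSet ∧ β ∈ G.edgeSet ∧
    BipartiteGraph (G.deleteEdges {α, β}) ∧ MatchingCovered (G.deleteEdges {α, β})

/-- An `R`-brick: a brick with a fixed removable doubleton `R = {α, β}`. -/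
def RBrick {V : Type*} (G : SimpleGraph V) (α β : Sym2 V) : Prop :=
  BrickGraph G ∧ RemovableDoubleton G α β

/-- `V(R)`: the set of the four ends of the doubleton edges. -/
def VR {V : Type*} (α β : Sym2 V) : Set V := {v | v ∈ α ∨ v ∈ β}

/-- `e` is `R`-compatible: it is an edge of `H := G − R` and is removable in
both `G` and `H`. -/
def RCompatible {V : Type*} (G : SimpleGraph V) (α β e : Sym2 V) : Prop :=
  e ∈ (G.deleteEdges {α, β}).edgeSet ∧
    MatchingCovered (G.deleteEdges {e}) ∧
    MatchingCovered ((G.deleteEdges {α, β}).deleteEdges {e})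

/-- `e` is `R`-thin: `R`-compatible, and every barrier of `G − e` has at most
two vertices. -/
def RThin {V : Type*} (G : SimpleGraph V) (α β e : Sym2 V) : Prop :=
  RCompatible G α β e ∧
    ∀ S : Set V, IsBarrierOf (G.deleteEdges {e}) S → S.ncard ≤ 2

/-- The number of maximal nontrivial barriers of a graph. -/
noncomputable def barrierIndex {V : Type*} (G : SimpleGraph V) : ℕ :=
  Set.ncard {S : Set V | IsBarrierOf G S ∧ 2 ≤ S.ncard ∧
    ∀ T : Set V, IsBarrierOf G T → S ⊆ T → T = S}

/-- Degree of a vertex (as the cardinality of its neighbourhood). -/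
noncomputable def degOf {V : Type*} (G : SimpleGraph V) (v : V) : ℕ :=
  (G.neighborSet v).ncard

/-- The relation identifying each degree-two vertex with its neighbours
(bicontraction of all degree-two vertices at once). -/
def bicontractPairRel {V : Type*} (G : SimpleGraph V) (u v : V) : Prop :=
  G.Adj u v ∧ (degOf G u = 2 ∨ degOf G v = 2)

/-- The vertex identifications performed when taking the retract. -/
def retractSetoid {V : Type*} (G : SimpleGraph V) : Setoid V :=
  Relation.EqvGen.setoid (bicontractPairRel G)

/-- The retract of `G` (as a simple graph on the quotient). -/
def retractGraph {V : Type*} (G : SimpleGraph V) :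
    SimpleGraph (Quotient (retractSetoid G)) where
  Adj X Y := X ≠ Y ∧ ∃ u v : V,
    Quotient.mk (retractSetoid G) u = X ∧ Quotient.mk (retractSetoid G) v = Y ∧ G.Adj u v
  symm := by
    constructor
    rintro X Y ⟨hne, u, v, hu, hv, huv⟩
    exact ⟨hne.symm, v, u, hv, hu, huv.symm⟩
  loopless := by
    constructor
    rintro X ⟨hne, -⟩
    exact hne rfl

/-- The retract of `G` has a pair of parallel edges. -/
def retractHasParallel {V : Type*} (G : SimpleGraph V) : Prop :=
  ∃ p q p' q' : V, G.Adj p q ∧ G.Adj p' q' ∧ s(p, q) ≠ s(p', q') ∧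
    ¬ Relation.EqvGen (bicontractPairRel G) p q ∧
    ((Relation.EqvGen (bicontractPairRel G) p p' ∧
        Relation.EqvGen (bicontractPairRel G) q q') ∨
     (Relation.EqvGen (bicontractPairRel G) p q' ∧
        Relation.EqvGen (bicontractPairRel G) q p'))

/-- `e` is strictly `R`-thin: `R`-thin and the retract of `G − e` has no
parallel edges. -/
def StrictlyRThin {V : Type*} (G : SimpleGraph V) (α β e : Sym2 V) : Prop :=
  RThin G α β e ∧ ¬ retractHasParallel (G.deleteEdges {e})

/-- The ladder with `m` rungs: two paths `x₀…x_{m-1}` (first coordinate `0`)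
and `y₀…y_{m-1}` (first coordinate `1`) together with the rungs `xᵢyᵢ`. -/
def ladderGraph (m : ℕ) : SimpleGraph (Fin 2 × Fin m) :=
  SimpleGraph.fromRel (fun p q =>
    (p.1 = q.1 ∧ p.2.val + 1 = q.2.val) ∨ (p.1 ≠ q.1 ∧ p.2 = q.2))

/-- The partial biwheel on the odd path `x₀…x_{2k-1}` (the `inl` vertices)
with hubs `u = inr 0` (joined to the even-indexed path vertices) and
`w = inr 1` (joined to the odd-indexed path vertices). -/
def biwheelGraph (k : ℕ) : SimpleGraph (Fin (2 * k) ⊕ Fin 2) :=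
  SimpleGraph.fromRel (fun p q =>
    match p, q with
    | Sum.inl i, Sum.inl j => i.val + 1 = j.val
    | Sum.inr h, Sum.inl i => (h = 0 ∧ i.val % 2 = 0) ∨ (h = 1 ∧ i.val % 2 = 1)
    | _, _ => False)

/-- The subgraph `K` of `Γ` is a ladder with `m` rungs and corners `a u b w`:
`au` and `bw` are its external rungs, labelled according to the convention
that `a` and `w` lie in one colour class and `b` and `u` in the other. -/
def LadderOn {W : Type*} (Γ : SimpleGraph W) (K : Γ.Subgraph) (m : ℕ)
    (a u b w : W) : Prop :=
  ∃ (hm : 3 ≤ m) (φ : ladderGraph m ≃g K.coe),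
    (φ ((0 : Fin 2), (⟨0, by omega⟩ : Fin m))).val = a ∧
    (φ ((1 : Fin 2), (⟨0, by omega⟩ : Fin m))).val = u ∧
    (if m % 2 = 1 then
        (φ ((0 : Fin 2), (⟨m - 1, by omega⟩ : Fin m))).val = w ∧
        (φ ((1 : Fin 2), (⟨m - 1, by omega⟩ : Fin m))).val = b
      else
        (φ ((1 : Fin 2), (⟨m - 1, by omega⟩ : Fin m))).val = w ∧
        (φ ((0 : Fin 2), (⟨m - 1, by omega⟩ : Fin m))).val = b)

/-- The subgraph `K` of `Γ` is a partial biwheel (parameter `k`, order `2k+2`)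
with ends `a`, `b` and hubs `u`, `w`; its external spokes are `au` and `bw`. -/
def BiwheelOn {W : Type*} (Γ : SimpleGraph W) (K : Γ.Subgraph) (k : ℕ)
    (a u b w : W) : Prop :=
  ∃ (hk : 2 ≤ k) (φ : biwheelGraph k ≃g K.coe),
    (φ (Sum.inl (⟨0, by omega⟩ : Fin (2 * k)))).val = a ∧
    (φ (Sum.inl (⟨2 * k - 1, by omega⟩ : Fin (2 * k)))).val = b ∧
    (φ (Sum.inr 0)).val = u ∧
    (φ (Sum.inr 1)).val = w

/-- Truncated biwheel: a spanning partial biwheel plus the edges `aw`, `bu`. -/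
def IsTruncatedBiwheel {V : Type*} (G : SimpleGraph V) : Prop :=
  ∃ (K : G.Subgraph) (k : ℕ) (a u b w : V),
    BiwheelOn G K k a u b w ∧ K.verts = Set.univ ∧
    G.edgeSet = K.edgeSet ∪ {s(a, w), s(b, u)}

/-- Prism: a spanning odd ladder plus the edges `aw`, `bu`. -/
def IsPrism {V : Type*} (G : SimpleGraph V) : Prop :=
  ∃ (K : G.Subgraph) (m : ℕ) (a u b w : V),
    Odd m ∧ LadderOn G K m a u b w ∧ K.verts = Set.univ ∧
    G.edgeSet = K.edgeSet ∪ {s(a, w), s(b, u)}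

/-- Möbius ladder: a spanning even ladder plus the edges `aw`, `bu`;
by convention `K₄` is also a Möbius ladder. -/
def IsMobiusLadder {V : Type*} (G : SimpleGraph V) : Prop :=
  (∃ (K : G.Subgraph) (m : ℕ) (a u b w : V),
    Even m ∧ LadderOn G K m a u b w ∧ K.verts = Set.univ ∧
    G.edgeSet = K.edgeSet ∪ {s(a, w), s(b, u)}) ∨
  Nonempty (G ≃g (⊤ : SimpleGraph (Fin 4)))

/-- Staircase: a ladder plus two new vertices `a₂`, `b₂` and the five edges
`a a₂`, `u a₂`, `b b₂`, `w b₂`, `a₂ b₂`. -/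
def IsStaircase {V : Type*} (G : SimpleGraph V) : Prop :=
  ∃ (K : G.Subgraph) (m : ℕ) (a u b w a2 b2 : V),
    LadderOn G K m a u b w ∧
    a2 ∉ K.verts ∧ b2 ∉ K.verts ∧ a2 ≠ b2 ∧
    K.verts ∪ {a2, b2} = Set.univ ∧
    G.edgeSet = K.edgeSet ∪ {s(a, a2), s(u, a2), s(b, b2), s(w, b2), s(a2, b2)}

/-- Pseudo-biwheel: a partial biwheel of order at least eight plus two new
vertices `a₂`, `b₂` and the five edges `a a₂`, `u a₂`, `b b₂`, `w b₂`,
`a₂ b₂`. -/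
def IsPseudoBiwheel {V : Type*} (G : SimpleGraph V) : Prop :=
  ∃ (K : G.Subgraph) (k : ℕ) (a u b w a2 b2 : V),
    3 ≤ k ∧ BiwheelOn G K k a u b w ∧
    a2 ∉ K.verts ∧ b2 ∉ K.verts ∧ a2 ≠ b2 ∧
    K.verts ∪ {a2, b2} = Set.univ ∧
    G.edgeSet = K.edgeSet ∪ {s(a, a2), s(u, a2), s(b, b2), s(w, b2), s(a2, b2)}

/-- Double biwheel of type I: two partial biwheels sharing precisely their
hubs `u`, `w`, plus the edges `a₁a₂` and `b₁b₂`. -/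
def IsDoubleBiwheelI {V : Type*} (G : SimpleGraph V) : Prop :=
  ∃ (K1 K2 : G.Subgraph) (k1 k2 : ℕ) (a1 b1 a2 b2 u w : V),
    BiwheelOn G K1 k1 a1 u b1 w ∧ BiwheelOn G K2 k2 a2 u b2 w ∧
    K1.verts ∩ K2.verts = {u, w} ∧ K1.verts ∪ K2.verts = Set.univ ∧
    G.edgeSet = K1.edgeSet ∪ K2.edgeSet ∪ {s(a1, a2), s(b1, b2)}

/-- Double ladder of type I. -/
def IsDoubleLadderI {V : Type*} (G : SimpleGraph V) : Prop :=
  ∃ (K1 K2 : G.Subgraph) (m1 m2 : ℕ) (a1 b1 a2 b2 u w : V),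
    LadderOn G K1 m1 a1 u b1 w ∧ LadderOn G K2 m2 a2 u b2 w ∧
    K1.verts ∩ K2.verts = {u, w} ∧ K1.verts ∪ K2.verts = Set.univ ∧
    G.edgeSet = K1.edgeSet ∪ K2.edgeSet ∪ {s(a1, a2), s(b1, b2)}

/-- Laddered biwheel of type I. -/
def IsLadderedBiwheelI {V : Type*} (G : SimpleGraph V) : Prop :=
  ∃ (K1 K2 : G.Subgraph) (k1 m2 : ℕ) (a1 b1 a2 b2 u w : V),
    BiwheelOn G K1 k1 a1 u b1 w ∧ LadderOn G K2 m2 a2 u b2 w ∧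
    K1.verts ∩ K2.verts = {u, w} ∧ K1.verts ∪ K2.verts = Set.univ ∧
    G.edgeSet = K1.edgeSet ∪ K2.edgeSet ∪ {s(a1, a2), s(b1, b2)}

/-- Double biwheel of type II: two vertex-disjoint partial biwheels of order
at least eight plus the four edges `a₁a₂`, `b₁b₂`, `u₁w₂`, `w₁u₂`. -/
def IsDoubleBiwheelII {V : Type*} (G : SimpleGraph V) : Prop :=
  ∃ (K1 K2 : G.Subgraph) (k1 k2 : ℕ) (a1 u1 b1 w1 a2 u2 b2 w2 : V),
    3 ≤ k1 ∧ 3 ≤ k2 ∧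
    BiwheelOn G K1 k1 a1 u1 b1 w1 ∧ BiwheelOn G K2 k2 a2 u2 b2 w2 ∧
    K1.verts ∩ K2.verts = ∅ ∧ K1.verts ∪ K2.verts = Set.univ ∧
    G.edgeSet = K1.edgeSet ∪ K2.edgeSet ∪
      {s(a1, a2), s(b1, b2), s(u1, w2), s(w1, u2)}

/-- Double ladder of type II. -/
def IsDoubleLadderII {V : Type*} (G : SimpleGraph V) : Prop :=
  ∃ (K1 K2 : G.Subgraph) (m1 m2 : ℕ) (a1 u1 b1 w1 a2 u2 b2 w2 : V),
    LadderOn G K1 m1 a1 u1 b1 w1 ∧ LadderOn G K2 m2 a2 u2 b2 w2 ∧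
    K1.verts ∩ K2.verts = ∅ ∧ K1.verts ∪ K2.verts = Set.univ ∧
    G.edgeSet = K1.edgeSet ∪ K2.edgeSet ∪
      {s(a1, a2), s(b1, b2), s(u1, w2), s(w1, u2)}

/-- Laddered biwheel of type II. -/
def IsLadderedBiwheelII {V : Type*} (G : SimpleGraph V) : Prop :=
  ∃ (K1 K2 : G.Subgraph) (k1 m2 : ℕ) (a1 u1 b1 w1 a2 u2 b2 w2 : V),
    3 ≤ k1 ∧
    BiwheelOn G K1 k1 a1 u1 b1 w1 ∧ LadderOn G K2 m2 a2 u2 b2 w2 ∧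
    K1.verts ∩ K2.verts = ∅ ∧ K1.verts ∪ K2.verts = Set.univ ∧
    G.edgeSet = K1.edgeSet ∪ K2.edgeSet ∪
      {s(a1, a2), s(b1, b2), s(u1, w2), s(w1, u2)}

/-- Membership in one of the eleven infinite families. -/
def InEleven {V : Type*} (G : SimpleGraph V) : Prop :=
  IsTruncatedBiwheel G ∨ IsPrism G ∨ IsMobiusLadder G ∨ IsStaircase G ∨
  IsPseudoBiwheel G ∨ IsDoubleBiwheelI G ∨ IsDoubleLadderI G ∨
  IsLadderedBiwheelI G ∨ IsDoubleBiwheelII G ∨ IsDoubleLadderII G ∨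
  IsLadderedBiwheelII G

/-- An `R`-ladder configuration: a subgraph `K` of `H := G − R` which is a
ladder with external rungs `au` and `bw` (free corners `u`, `w`) such that
every vertex of `K` except possibly `u` and `w` is cubic in `G`, the corners
`a` and `b` lie in `V(R)`, and every internal rung is an `R`-thin edge of `G`
whose index is two. -/
def RLadderConfig {V : Type*} (G : SimpleGraph V) (α β : Sym2 V)
    (K : (G.deleteEdges {α, β}).Subgraph) (a u b w : V) : Prop :=
  ∃ (m : ℕ) (hm : 3 ≤ m) (φ : ladderGraph m ≃g K.coe),
    (φ ((0 : Fin 2), (⟨0, by omega⟩ : Fin m))).val = a ∧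
    (φ ((1 : Fin 2), (⟨0, by omega⟩ : Fin m))).val = u ∧
    (if m % 2 = 1 then
        (φ ((0 : Fin 2), (⟨m - 1, by omega⟩ : Fin m))).val = w ∧
        (φ ((1 : Fin 2), (⟨m - 1, by omega⟩ : Fin m))).val = b
      else
        (φ ((1 : Fin 2), (⟨m - 1, by omega⟩ : Fin m))).val = w ∧
        (φ ((0 : Fin 2), (⟨m - 1, by omega⟩ : Fin m))).val = b) ∧
    (∀ v ∈ K.verts, v ≠ u → v ≠ w → degOf G v = 3) ∧
    a ∈ VR α β ∧ b ∈ VR α β ∧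
    (∀ i : Fin m, 0 < i.val → i.val < m - 1 →
      RThin G α β s((φ ((0 : Fin 2), i)).val, (φ ((1 : Fin 2), i)).val) ∧
      barrierIndex
        (G.deleteEdges {s((φ ((0 : Fin 2), i)).val, (φ ((1 : Fin 2), i)).val)}) = 2)

/-- An `R`-biwheel configuration: a subgraph `K` of `H := G − R` which is a
partial biwheel with external spokes `au` and `bw` (hubs `u`, `w`) such that
the hubs are not cubic in `G`, every other vertex of `K` is cubic in `G`, the
ends `a` and `b` lie in `V(R)`, and every internal spoke is an `R`-thin edge
of `G` whose index is one. -/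
def RBiwheelConfig {V : Type*} (G : SimpleGraph V) (α β : Sym2 V)
    (K : (G.deleteEdges {α, β}).Subgraph) (a u b w : V) : Prop :=
  ∃ (k : ℕ) (hk : 2 ≤ k) (φ : biwheelGraph k ≃g K.coe),
    (φ (Sum.inl (⟨0, by omega⟩ : Fin (2 * k)))).val = a ∧
    (φ (Sum.inl (⟨2 * k - 1, by omega⟩ : Fin (2 * k)))).val = b ∧
    (φ (Sum.inr 0)).val = u ∧
    (φ (Sum.inr 1)).val = w ∧
    degOf G u ≠ 3 ∧ degOf G w ≠ 3 ∧
    (∀ v ∈ K.verts, v ≠ u → v ≠ w → degOf G v = 3) ∧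
    a ∈ VR α β ∧ b ∈ VR α β ∧
    (∀ e ∈ K.edgeSet, (u ∈ e ∨ w ∈ e) → e ≠ s(a, u) → e ≠ s(b, w) →
      RThin G α β e ∧ barrierIndex (G.deleteEdges {e}) = 1)

/-- An `R`-configuration: an `R`-ladder or an `R`-biwheel, with free corners
`u` and `w`. -/
def RConfig {V : Type*} (G : SimpleGraph V) (α β : Sym2 V)
    (K : (G.deleteEdges {α, β}).Subgraph) (a u b w : V) : Prop :=
  RLadderConfig G α β K a u b w ∨ RBiwheelConfig G α β K a u b w

/-- A 4-cycle on the four (distinct) vertices `v0 v1 v2 v3`. -/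
def Is4Cycle {V : Type*} (H : SimpleGraph V) (v0 v1 v2 v3 : V) : Prop :=
  v0 ≠ v1 ∧ v0 ≠ v2 ∧ v0 ≠ v3 ∧ v1 ≠ v2 ∧ v1 ≠ v3 ∧ v2 ≠ v3 ∧
  H.Adj v0 v1 ∧ H.Adj v1 v2 ∧ H.Adj v2 v3 ∧ H.Adj v3 v0

/-- The cut `∂(X)`. -/
def edgeCutOf {V : Type*} (G : SimpleGraph V) (X : Set V) : Set (Sym2 V) :=
  {e | e ∈ G.edgeSet ∧ ∃ p q : V, e = s(p, q) ∧ p ∈ X ∧ q ∉ X}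

/-- The cut `∂(X)` is tight: every perfect matching contains exactly one of
its edges. -/
def TightCut {V : Type*} (G : SimpleGraph V) (X : Set V) : Prop :=
  ∀ M : G.Subgraph, M.IsPerfectMatching → (M.edgeSet ∩ edgeCutOf G X).ncard = 1

/-- A brace: a bipartite matching covered graph with no nontrivial tight cut. -/
def IsBrace {V : Type*} (G : SimpleGraph V) : Prop :=
  BipartiteGraph G ∧ MatchingCovered G ∧
    ¬ ∃ X : Set V, 2 ≤ X.ncard ∧ 2 ≤ Xᶜ.ncard ∧ TightCut G X

/-! Perfect matchings are encoded as fixed-point-free involutions. To put an edge `g ≠ e` of `H`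
into a perfect matching of `H − e`, take a perfect matching `σ` through `g`, which we may assume
contains `e = v0v1`, and one, `τ`, through `f = v2v3` avoiding `e`. In `σ ∪ τ` with `e` and `f`
removed, the alternating path leaving `v1` cannot reach `v2`, because `v2` has the colour of `v0`,
so it ends at `v0` or at `v3`.
If it ends at `v0`, it closes with `e` into an alternating cycle `C` missing `f`: if `g ∉ C`,
exchange `σ` along `C`; otherwise take `σ` on `C` and `τ` elsewhere, and switch the two opposite
edges `e`, `f` of the quadrilateral for the other two.
If it ends at `v3`, it closes with `e` and `v3v0` into an alternating cycle, and the path leaving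
`v0` likewise closes with `e` and `v1v2`. These two cycles meet only in `e`, so exchanging `σ`
along one that misses `g` works. -/

open Function Relation

section AltWalk

variable {V : Type*} {f g : V → V} {v : V}

def altWalk (f g : V → V) (v : V) : ℕ → V
  | 0 => v
  | n + 1 => if Even n then f (altWalk f g v n) else g (altWalk f g v n)

lemma altWalk_succ_of_even {n : ℕ} (hn : Even n) :
    altWalk f g v (n + 1) = f (altWalk f g v n) :=
  if_pos hn

lemma altWalk_succ_of_odd {n : ℕ} (hn : Odd n) :
    altWalk f g v (n + 1) = g (altWalk f g v n) :=
  if_neg (Nat.not_even_iff_odd.2 hn)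

lemma altWalk_two_mul (k : ℕ) : altWalk f g v (2 * k) = (g ∘ f)^[k] v := by
  induction k with
  | zero => rfl
  | succ k ih =>
    rw [show 2 * (k + 1) = 2 * k + 1 + 1 by ring, altWalk_succ_of_odd (odd_two_mul_add_one k),
      altWalk_succ_of_even (even_two_mul k), ih, iterate_succ_apply']
    rfl

lemma altWalk_mem_iff {A : Set V} (hf : ∀ u, f u ∈ A ↔ u ∉ A) (hg : ∀ u, g u ∈ A ↔ u ∉ A)
    (n : ℕ) : altWalk f g v n ∈ A ↔ (Even n ↔ v ∈ A) := by
  induction n with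
  | zero => simp [altWalk]
  | succ n ih =>
    have hstep : altWalk f g v (n + 1) ∈ A ↔ altWalk f g v n ∉ A := by
      rcases Nat.even_or_odd n with hn | hn
      · rw [altWalk_succ_of_even hn, hf]
      · rw [altWalk_succ_of_odd hn, hg]
    rw [hstep, ih, Nat.even_add_one]
    tauto

lemma even_iff_of_altWalk_eq {A : Set V} {u : V} (hf : ∀ u, f u ∈ A ↔ u ∉ A)
    (hg : ∀ u, g u ∈ A ↔ u ∉ A) {n : ℕ} (h : altWalk f g v n = u) : Even n ↔ (u ∈ A ↔ v ∈ A) := by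
  have := altWalk_mem_iff hf hg (v := v) n
  rw [h] at this
  tauto

/-- Since `g ∘ f` is injective on a finite type, the walk returns to `v` at an even time; the step
before that is the `g`-step from `g v`. -/
lemma exists_odd_altWalk_eq [Finite V] (hf : Injective f) (hg : Involutive g) (v : V) :
    ∃ n, Odd n ∧ altWalk f g v n = g v := by
  obtain ⟨k, hk, hper⟩ := mem_periodicPts.1 ((hg.injective.comp hf).mem_periodicPts v)
  have hodd : Odd (2 * k - 1) := ⟨k - 1, by omega⟩
  have hlast := altWalk_succ_of_odd (f := f) (g := g) (v := v) hodd
  rw [Nat.sub_add_cancel (by omega), altWalk_two_mul, hper.eq] at hlast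
  exact ⟨2 * k - 1, hodd, hg.eq_iff.1 hlast.symm⟩

end AltWalk

section AltComponent

variable {V : Type*} {σ τ : V → V} {e f : Sym2 V} {v0 v1 v2 v3 u v : V}

/-- A step along the union of the matchings `σ` and `τ` from which the `σ`-edge `e` and the
`τ`-edge `f` are deleted. -/
def altStep (σ τ : V → V) (e f : Sym2 V) (a b : V) : Prop :=
  (a ∉ e ∧ b = σ a) ∨ (a ∉ f ∧ b = τ a)

def altComponent (σ τ : V → V) (e f : Sym2 V) (v : V) : Set V :=
  {u | ReflTransGen (altStep σ τ e f) v u}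

lemma mem_altComponent_self : v ∈ altComponent σ τ e f v := ReflTransGen.refl

lemma apply_mem_altComponent_left (hu : u ∈ altComponent σ τ e f v) (he : u ∉ e) :
    σ u ∈ altComponent σ τ e f v :=
  ReflTransGen.tail hu (Or.inl ⟨he, rfl⟩)

lemma apply_mem_altComponent_right (hu : u ∈ altComponent σ τ e f v) (hf : u ∉ f) :
    τ u ∈ altComponent σ τ e f v :=
  ReflTransGen.tail hu (Or.inr ⟨hf, rfl⟩)

lemma Function.Involutive.apply_mem_sym2_iff {p : V → V} (hp : Involutive p) (h : p v0 = v1)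
    (a : V) : p a ∈ s(v0, v1) ↔ a ∈ s(v0, v1) := by
  have h' : p v1 = v0 := h ▸ hp v0
  rw [Sym2.mem_iff, Sym2.mem_iff, hp.eq_iff, hp.eq_iff, h, h', or_comm]

lemma altStep_symm (hσ : Involutive σ) (hτ : Involutive τ) (h01 : σ v0 = v1) (h23 : τ v2 = v3)
    {a b : V} (h : altStep σ τ s(v0, v1) s(v2, v3) a b) :
    altStep σ τ s(v0, v1) s(v2, v3) b a := by
  rcases h with ⟨ha, rfl⟩ | ⟨ha, rfl⟩
  · exact Or.inl ⟨by rwa [hσ.apply_mem_sym2_iff h01], (hσ a).symm⟩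
  · exact Or.inr ⟨by rwa [hτ.apply_mem_sym2_iff h23], (hτ a).symm⟩

lemma mem_altComponent_comm (hσ : Involutive σ) (hτ : Involutive τ) (h01 : σ v0 = v1)
    (h23 : τ v2 = v3) (hu : u ∈ altComponent σ τ s(v0, v1) s(v2, v3) v) :
    v ∈ altComponent σ τ s(v0, v1) s(v2, v3) u :=
  ReflTransGen.mono (fun _ _ h => altStep_symm hσ hτ h01 h23 h) _ _ (ReflTransGen.swap _ _ hu)

variable {A : Set V}

lemma exists_altWalk_first_visit [Finite V] (hσ : Involutive σ) (hτ : Involutive τ)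
    (hσA : ∀ u, σ u ∈ A ↔ u ∉ A) (hτA : ∀ u, τ u ∈ A ↔ u ∉ A)
    (h01 : σ v0 = v1) (h23 : τ v2 = v3) (h02 : v0 ∈ A ↔ v2 ∈ A) :
    ∃ T, (∀ i ≤ T, altWalk τ σ v1 i ≠ v2) ∧
      (∀ i < T, altWalk τ σ v1 i ≠ v0 ∧ altWalk τ σ v1 i ≠ v3) ∧
      ((altWalk τ σ v1 T = v0 ∧ Odd T) ∨ (altWalk τ σ v1 T = v3 ∧ Even T)) := by
  classical
  set w := altWalk τ σ v1
  have hpar : ∀ {n u}, w n = u → (Even n ↔ (u ∈ A ↔ v1 ∈ A)) := even_iff_of_altWalk_eq hτA hσA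
  have hv1A : v1 ∈ A ↔ v0 ∉ A := h01 ▸ hσA v0
  have hv3A : v3 ∈ A ↔ v0 ∉ A := h23 ▸ (hτA v2).trans (not_congr h02.symm)
  have hhit : ∃ n, w n ∈ ({v0, v2, v3} : Set V) := by
    obtain ⟨n, -, hn⟩ := exists_odd_altWalk_eq hτ.injective hσ v1
    exact ⟨n, Or.inl (hn.trans (hσ.eq_iff.1 h01).symm)⟩
  have hmin : ∀ i < Nat.find hhit, w i ≠ v0 ∧ w i ≠ v2 ∧ w i ≠ v3 := fun i hi => by
    simpa using Nat.find_min hhit hi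
  have hT2 : w (Nat.find hhit) ≠ v2 := fun h => by
    -- `v2` has the colour of `v0`, so it is entered by a `τ`-step, which comes from `v3`
    obtain ⟨m, hm⟩ : Odd (Nat.find hhit) := Nat.not_even_iff_odd.1 fun he => by
      have := (hpar h).1 he
      tauto
    have hprev : w (Nat.find hhit) = τ (w (2 * m)) := hm ▸ altWalk_succ_of_even (even_two_mul m)
    exact (hmin (2 * m) (by omega)).2.2 (by rw [hτ.eq_iff.1 hprev.symm, h, h23])
  refine ⟨Nat.find hhit, fun i hi => ?_, fun i hi => ⟨(hmin i hi).1, (hmin i hi).2.2⟩, ?_⟩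
  · rcases hi.lt_or_eq with hi | rfl
    exacts [(hmin i hi).2.1, hT2]
  · rcases Nat.find_spec hhit with h | h | h
    · refine Or.inl ⟨h, Nat.not_even_iff_odd.1 fun he => ?_⟩
      have := (hpar h).1 he
      tauto
    · exact absurd h hT2
    · refine Or.inr ⟨h, (hpar h).2 ?_⟩
      tauto

lemma altWalk_mem_altComponent (hσA : ∀ u, σ u ∈ A ↔ u ∉ A) (hτA : ∀ u, τ u ∈ A ↔ u ∉ A)
    {T : ℕ} (h2 : ∀ i ≤ T, altWalk τ σ v1 i ≠ v2)
    (h03 : ∀ i < T, altWalk τ σ v1 i ≠ v0 ∧ altWalk τ σ v1 i ≠ v3) :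
    ∀ i ≤ T, altWalk τ σ v1 i ∈ altComponent σ τ s(v0, v1) s(v2, v3) v1
  | 0, _ => mem_altComponent_self
  | i + 1, hi => by
    have ih := altWalk_mem_altComponent hσA hτA h2 h03 i (by omega)
    rcases Nat.even_or_odd i with hpar | hpar
    · rw [altWalk_succ_of_even hpar]
      exact apply_mem_altComponent_right ih
        (by simp [Sym2.mem_iff, h2 i (by omega), (h03 i hi).2])
    · have hi1 : altWalk τ σ v1 i ≠ v1 := fun h =>
        Nat.not_even_iff_odd.2 hpar ((even_iff_of_altWalk_eq hτA hσA h).2 Iff.rfl)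
      rw [altWalk_succ_of_odd hpar]
      exact apply_mem_altComponent_left ih (by simp [Sym2.mem_iff, (h03 i hi).1, hi1])

lemma exists_altWalk_eq_of_mem_altComponent (hσ : Involutive σ) (hτ : Involutive τ) {T : ℕ}
    (hend : (altWalk τ σ v1 T = v0 ∧ Odd T) ∨ (altWalk τ σ v1 T = v3 ∧ Even T))
    (hu : u ∈ altComponent σ τ s(v0, v1) s(v2, v3) v1) : ∃ i ≤ T, altWalk τ σ v1 i = u := by
  induction hu with
  | refl => exact ⟨0, Nat.zero_le _, rfl⟩
  | tail _ hstep ih =>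
    obtain ⟨i, hiT, rfl⟩ := ih
    rcases hstep with ⟨he, rfl⟩ | ⟨hf, rfl⟩ <;> rcases Nat.even_or_odd i with hi | hi
    · obtain ⟨j, rfl⟩ : ∃ j, i = j + 1 :=
        Nat.exists_eq_succ_of_ne_zero (by rintro rfl; exact he (Sym2.mem_mk_right _ _))
      have hj : Odd j := Nat.not_even_iff_odd.1 (Nat.even_add_one.1 hi)
      exact ⟨j, by omega, by rw [altWalk_succ_of_odd hj, hσ]⟩
    · refine ⟨i + 1, lt_of_le_of_ne hiT ?_, altWalk_succ_of_odd hi⟩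
      rintro rfl
      rcases hend with ⟨h, -⟩ | ⟨-, h⟩
      · exact he (h ▸ Sym2.mem_mk_left _ _)
      · exact Nat.not_even_iff_odd.2 hi h
    · refine ⟨i + 1, lt_of_le_of_ne hiT ?_, altWalk_succ_of_even hi⟩
      rintro rfl
      rcases hend with ⟨-, h⟩ | ⟨h, -⟩
      · exact Nat.not_even_iff_odd.2 h hi
      · exact hf (h ▸ Sym2.mem_mk_right _ _)
    · obtain ⟨j, rfl⟩ : ∃ j, i = j + 1 :=
        Nat.exists_eq_succ_of_ne_zero (by rintro rfl; exact Nat.not_even_iff_odd.2 hi ⟨0, rfl⟩)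
      have hj : Even j := Nat.not_odd_iff_even.1 (Nat.odd_add_one.1 hi)
      exact ⟨j, by omega, by rw [altWalk_succ_of_even hj, hτ]⟩

lemma altComponent_quad [Finite V] (hσ : Involutive σ) (hτ : Involutive τ)
    (hσA : ∀ u, σ u ∈ A ↔ u ∉ A) (hτA : ∀ u, τ u ∈ A ↔ u ∉ A)
    (h01 : σ v0 = v1) (h23 : τ v2 = v3) (h02 : v0 ∈ A ↔ v2 ∈ A) :
    v2 ∉ altComponent σ τ s(v0, v1) s(v2, v3) v1 ∧
      (v0 ∈ altComponent σ τ s(v0, v1) s(v2, v3) v1 ↔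
        v3 ∉ altComponent σ τ s(v0, v1) s(v2, v3) v1) := by
  obtain ⟨T, h2, h03, hend⟩ := exists_altWalk_first_visit hσ hτ hσA hτA h01 h23 h02
  have hC : ∀ {u}, u ∈ altComponent σ τ s(v0, v1) s(v2, v3) v1 → ∃ i ≤ T, altWalk τ σ v1 i = u :=
    exists_altWalk_eq_of_mem_altComponent hσ hτ hend
  have hCT := altWalk_mem_altComponent hσA hτA h2 h03 T le_rfl
  have hv03 : v0 ≠ v3 := fun h => by
    have hv3A : v3 ∈ A ↔ v0 ∉ A := h23 ▸ (hτA v2).trans (not_congr h02.symm)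
    rw [h] at hv3A
    tauto
  refine ⟨fun hv2 => ?_, ?_⟩
  · obtain ⟨i, hi, h⟩ := hC hv2
    exact h2 i hi h
  rcases hend with ⟨hT, -⟩ | ⟨hT, -⟩ <;> rw [hT] at hCT
  · refine iff_of_true hCT fun hv3 => ?_
    obtain ⟨i, hi, h⟩ := hC hv3
    rcases hi.lt_or_eq with hi | rfl
    exacts [(h03 i hi).2 h, hv03 (hT.symm.trans h)]
  · refine iff_of_false (fun hv0 => ?_) (not_not.2 hCT)
    obtain ⟨i, hi, h⟩ := hC hv0
    rcases hi.lt_or_eq with hi | rfl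
    exacts [(h03 i hi).1 h, hv03 (h.symm.trans hT)]

end AltComponent

section Pairing

variable {V : Type*} {G : SimpleGraph V} {p σ τ : V → V} {v0 v1 v2 v3 : V}

/-- A perfect matching of `G`, given by the partner of each vertex. -/
def IsPairing (G : SimpleGraph V) (p : V → V) : Prop :=
  Involutive p ∧ ∀ v, G.Adj v (p v)

lemma SimpleGraph.Subgraph.IsPerfectMatching.exists_isPairing {M : G.Subgraph}
    (hM : M.IsPerfectMatching) : ∃ p, IsPairing G p ∧ ∀ u w, M.Adj u w ↔ p u = w := by
  choose p hp hpu using fun v => SimpleGraph.Subgraph.isPerfectMatching_iff.1 hM v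
  have hiff : ∀ u w, M.Adj u w ↔ p u = w :=
    fun u w => ⟨fun h => (hpu u w h).symm, fun h => h ▸ hp u⟩
  exact ⟨p, ⟨fun v => (hiff _ _).1 (hp v).symm, fun v => (hp v).adj_sub⟩, hiff⟩

lemma isPairing_deleteEdges_iff :
    IsPairing (G.deleteEdges {s(v0, v1)}) p ↔ IsPairing G p ∧ p v0 ≠ v1 := by
  refine ⟨fun hp => ⟨⟨hp.1, fun v => (SimpleGraph.deleteEdges_adj.1 (hp.2 v)).1⟩, fun h => ?_⟩,
    fun ⟨hp, h⟩ => ⟨hp.1, fun v => SimpleGraph.deleteEdges_adj.2 ⟨hp.2 v, ?_⟩⟩⟩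
  · simpa [h] using hp.2 v0
  · simp only [Set.mem_singleton_iff, Sym2.eq_iff]
    rintro (⟨rfl, h'⟩ | ⟨rfl, rfl⟩)
    exacts [h h', h (hp.1 _)]

namespace IsPairing

lemma exists_isPerfectMatching (hp : IsPairing G p) :
    ∃ M : G.Subgraph, M.IsPerfectMatching ∧ ∀ u w, M.Adj u w ↔ p u = w :=
  let M : G.Subgraph :=
    { verts := Set.univ
      Adj := fun u w => p u = w
      adj_sub := by rintro u _ rfl; exact hp.2 u
      edge_vert := fun _ => trivial
      symm := ⟨fun u w h => by rw [← h, hp.1 u]⟩ }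
  ⟨M, SimpleGraph.Subgraph.isPerfectMatching_iff.2 fun v => ⟨p v, rfl, fun _ h => Eq.symm h⟩,
    fun _ _ => Iff.rfl⟩

lemma piecewise {π : V → V} {S : Set V} [∀ u, Decidable (u ∈ S)] (hp : IsPairing G p)
    (hpS : ∀ u ∈ S, p u ∈ S) (hπS : ∀ u ∈ S, π u ∈ S) (hπ : ∀ u ∈ S, π (π u) = u)
    (hπG : ∀ u ∈ S, G.Adj u (π u)) : IsPairing G (S.piecewise π p) := by
  refine ⟨fun u => ?_, fun u => ?_⟩ <;> by_cases hu : u ∈ S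
  · simp [hu, hπS u hu, hπ u hu]
  · have hpu : p u ∉ S := fun h => hu (hp.1 u ▸ hpS _ h)
    simp [hu, hpu, hp.1 u]
  · simpa [hu] using hπG u hu
  · simpa [hu] using hp.2 u

lemma exists_switch (hp : IsPairing G p) (hQ : Is4Cycle G v0 v1 v2 v3) (h01 : p v0 = v1)
    (h23 : p v2 = v3) :
    ∃ q, IsPairing G q ∧ q v0 = v3 ∧
      ∀ u, u ≠ v0 → u ≠ v1 → u ≠ v2 → u ≠ v3 → q u = p u := by
  classical
  obtain ⟨d01, d02, d03, d12, d13, d23, -, a12, -, a30⟩ := hQ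
  have h10 : p v1 = v0 := h01 ▸ hp.1 v0
  have h32 : p v3 = v2 := h23 ▸ hp.1 v2
  let π : V → V := fun u => if u = v0 then v3 else if u = v3 then v0 else if u = v1 then v2 else v1
  refine ⟨({v0, v1, v2, v3} : Set V).piecewise π p, hp.piecewise ?_ ?_ ?_ ?_, by simp [π],
    fun u h0 h1 h2 h3 => by simp [h0, h1, h2, h3]⟩ <;>
    rintro u (rfl | rfl | rfl | rfl) <;>
    simp [π, h01, h10, h23, h32, d01, d02, d03, d12, d13, d23, d01.symm, d02.symm, d03.symm,
      d12.symm, d13.symm, d23.symm, a12, a12.symm, a30, a30.symm]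

/-- `S` is the alternating path from `v1` to `v3`; with `v0v1 ∈ σ` and `v3v0` it closes into an
alternating cycle along which `σ` is exchanged. -/
lemma exists_exchange_altPath (hσ : IsPairing G σ) (hτ : IsPairing G τ) {S : Set V}
    (h01 : σ v0 = v1) (h23 : τ v2 = v3) (a30 : G.Adj v3 v0)
    (hv0 : v0 ∉ S) (hv1 : v1 ∈ S) (hv2 : v2 ∉ S) (hv3 : v3 ∈ S)
    (hσS : ∀ u ∈ S, u ≠ v1 → σ u ∈ S) (hτS : ∀ u ∈ S, u ≠ v3 → τ u ∈ S) :
    ∃ q, IsPairing G q ∧ q v0 = v3 ∧ ∀ u ∉ S, u ≠ v0 → q u = σ u := by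
  classical
  have h10 : σ v1 = v0 := h01 ▸ hσ.1 v0
  have h32 : τ v3 = v2 := h23 ▸ hτ.1 v2
  have h03 : v0 ≠ v3 := ne_of_mem_of_not_mem hv3 hv0 |>.symm
  let π : V → V := fun u => if u = v0 then v3 else if u = v3 then v0 else τ u
  have hτS' : ∀ u ∈ S, u ≠ v3 → τ u ≠ v0 ∧ τ u ≠ v3 := fun u hu hu3 =>
    ⟨ne_of_mem_of_not_mem (hτS u hu hu3) hv0,
      fun h => hv2 (by rwa [← h32, ← h, hτ.1 u])⟩
  refine ⟨(insert v0 S).piecewise π σ, hσ.piecewise ?_ ?_ ?_ ?_, by simp [π],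
    fun u hu hu0 => by simp [hu, hu0]⟩
  · rintro u (rfl | hu)
    · simp [h01, hv1]
    · by_cases hu1 : u = v1
      · simp [hu1, h10]
      · exact Set.mem_insert_of_mem _ (hσS u hu hu1)
  · rintro u (rfl | hu)
    · simp [π, hv3]
    · by_cases hu3 : u = v3
      · simp [π, hu3, h03.symm]
      · simp [π, ne_of_mem_of_not_mem hu hv0, hu3, hτS u hu hu3]
  · rintro u (rfl | hu)
    · simp [π, h03.symm]
    · by_cases hu3 : u = v3
      · simp [π, hu3, h03.symm]
      · simp [π, ne_of_mem_of_not_mem hu hv0, hu3, hτS' u hu hu3, hτ.1 u]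
  · rintro u (rfl | hu)
    · simpa [π] using a30.symm
    · by_cases hu3 : u = v3
      · simpa [π, hu3, h03.symm] using a30
      · simpa [π, ne_of_mem_of_not_mem hu hv0, hu3] using hτ.2 u

end IsPairing

end Pairing

section Quadrilateral

variable {V : Type*} {H : SimpleGraph V} {v0 v1 v2 v3 : V}

lemma BipartitionOf.mem_iff_notMem_of_adj {A B : Set V} (hAB : BipartitionOf H A B) {u w : V}
    (huw : H.Adj u w) : u ∈ A ↔ w ∉ A := by
  obtain ⟨hcover, hdisj, hadj⟩ := hAB
  rw [hadj huw]
  refine ⟨fun hw hwA => hdisj.notMem_of_mem_left hwA hw, fun hw => ?_⟩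
  have : w ∈ A ∪ B := hcover ▸ Set.mem_univ w
  exact this.resolve_left hw

lemma Is4Cycle.rotate (hQ : Is4Cycle H v0 v1 v2 v3) : Is4Cycle H v1 v2 v3 v0 := by
  obtain ⟨d01, d02, d03, d12, d13, d23, a01, a12, a23, a30⟩ := hQ
  exact ⟨d12, d13, d01.symm, d23, d02.symm, d03.symm, a12, a23, a30, a01⟩

lemma Is4Cycle.connected_deleteEdges (hQ : Is4Cycle H v0 v1 v2 v3) (hH : H.Connected) :
    (H.deleteEdges {s(v0, v1)}).Connected := by
  obtain ⟨d01, d02, d03, d12, d13, d23, -, a12, a23, a30⟩ := hQ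
  refine hH.connected_delete_edge_of_not_isBridge fun hbridge => hbridge ?_
  have adj : ∀ {a b}, H.Adj a b → s(a, b) ≠ s(v0, v1) → (H.deleteEdges {s(v0, v1)}).Adj a b :=
    fun hab hne => SimpleGraph.deleteEdges_adj.2 ⟨hab, hne⟩
  refine ((adj a30.symm ?_).reachable.trans (adj a23.symm ?_).reachable).trans
    (adj a12.symm ?_).reachable <;> simp [d01, d01.symm, d02.symm, d03.symm, d12.symm, d13.symm]

lemma exists_isPairing_of_mem_altComponent {σ τ : V → V} (hσ : IsPairing H σ)
    (hτ : IsPairing H τ) (hQ : Is4Cycle H v0 v1 v2 v3) (h01 : σ v0 = v1) (h23 : τ v2 = v3)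
    (hτ01 : τ v0 ≠ v1) (h0 : v0 ∈ altComponent σ τ s(v0, v1) s(v2, v3) v1)
    (h2 : v2 ∉ altComponent σ τ s(v0, v1) s(v2, v3) v1)
    (h3 : v3 ∉ altComponent σ τ s(v0, v1) s(v2, v3) v1) {x : V} (hx0 : x ≠ v0) (hx1 : x ≠ v1) :
    ∃ p, IsPairing H p ∧ p v0 ≠ v1 ∧ p x = σ x := by
  classical
  have ⟨_, _, _, _, d13, _⟩ := hQ
  set C := altComponent σ τ s(v0, v1) s(v2, v3) v1
  have hσC : ∀ u ∈ C, σ u ∈ C := fun u hu => by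
    by_cases hu01 : u ∈ s(v0, v1)
    · rcases Sym2.mem_iff.1 hu01 with rfl | rfl
      exacts [h01 ▸ mem_altComponent_self, (hσ.1.eq_iff.2 h01.symm) ▸ h0]
    · exact apply_mem_altComponent_left hu hu01
  have hτC : ∀ u ∈ C, τ u ∈ C := fun u hu => apply_mem_altComponent_right hu
    (by simp [Sym2.mem_iff, ne_of_mem_of_not_mem hu h2, ne_of_mem_of_not_mem hu h3])
  by_cases hx : x ∈ C
  · -- take `σ` on `C` and `τ` elsewhere, then switch around the quadrilateral
    obtain ⟨q, hq, hq0, hqx⟩ := (hτ.piecewise hτC hσC (fun u _ => hσ.1 u)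
      (fun u _ => hσ.2 u)).exists_switch hQ ((Set.piecewise_eq_of_mem _ _ _ h0).trans h01)
      ((Set.piecewise_eq_of_notMem _ _ _ h2).trans h23)
    refine ⟨q, hq, hq0 ▸ d13.symm, ?_⟩
    rw [hqx x hx0 hx1 (ne_of_mem_of_not_mem hx h2) (ne_of_mem_of_not_mem hx h3)]
    exact Set.piecewise_eq_of_mem _ _ _ hx
  · exact ⟨C.piecewise τ σ, hσ.piecewise hσC hτC (fun u _ => hτ.1 u) (fun u _ => hτ.2 u),
      by simp [h0, hτ01], by simp [hx]⟩

lemma exists_isPairing_of_notMem_altComponent {σ τ : V → V} (hσ : IsPairing H σ)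
    (hτ : IsPairing H τ) (h01 : σ v0 = v1) (h23 : τ v2 = v3) (a30 : H.Adj v3 v0)
    (h0 : v0 ∉ altComponent σ τ s(v0, v1) s(v2, v3) v1)
    (h2 : v2 ∉ altComponent σ τ s(v0, v1) s(v2, v3) v1)
    (h3 : v3 ∈ altComponent σ τ s(v0, v1) s(v2, v3) v1) :
    ∃ q, IsPairing H q ∧ q v0 = v3 ∧
      ∀ u ∉ altComponent σ τ s(v0, v1) s(v2, v3) v1, u ≠ v0 → q u = σ u :=
  hσ.exists_exchange_altPath hτ h01 h23 a30 h0 mem_altComponent_self h2 h3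
    (fun u hu hu1 => apply_mem_altComponent_left hu
      (by simp [Sym2.mem_iff, hu1, ne_of_mem_of_not_mem hu h0]))
    (fun u hu hu3 => apply_mem_altComponent_right hu
      (by simp [Sym2.mem_iff, hu3, ne_of_mem_of_not_mem hu h2]))

theorem exists_isPairing_ne_of_is4Cycle [Finite V] {A : Set V}
    (hA : ∀ ⦃u w⦄, H.Adj u w → (u ∈ A ↔ w ∉ A)) {σ τ : V → V} (hσ : IsPairing H σ)
    (hτ : IsPairing H τ) (hQ : Is4Cycle H v0 v1 v2 v3) (h01 : σ v0 = v1) (h23 : τ v2 = v3)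
    (hτ01 : τ v0 ≠ v1) {x : V} (hx0 : x ≠ v0) (hx1 : x ≠ v1) :
    ∃ p, IsPairing H p ∧ p v0 ≠ v1 ∧ p x = σ x := by
  have ⟨_, d02, _, _, d13, _, a01, a12, a23, a30⟩ := hQ
  have hσA : ∀ u, σ u ∈ A ↔ u ∉ A := fun u => by rw [hA (hσ.2 u)]; tauto
  have hτA : ∀ u, τ u ∈ A ↔ u ∉ A := fun u => by rw [hA (hτ.2 u)]; tauto
  have h10 : σ v1 = v0 := h01 ▸ hσ.1 v0
  have h32 : τ v3 = v2 := h23 ▸ hτ.1 v2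
  set C1 := altComponent σ τ s(v0, v1) s(v2, v3) v1
  set C0 := altComponent σ τ s(v1, v0) s(v3, v2) v0
  obtain ⟨h2C1, h03C1⟩ := altComponent_quad hσ.1 hτ.1 hσA hτA h01 h23
    (by rw [hA a01, hA a12]; tauto)
  obtain ⟨h3C0, h12C0⟩ := altComponent_quad hσ.1 hτ.1 hσA hτA h10 h32
    (by rw [hA a12, hA a23]; tauto)
  by_cases h0 : v0 ∈ C1
  · exact exists_isPairing_of_mem_altComponent hσ hτ hQ h01 h23 hτ01 h0 h2C1 (h03C1.1 h0) hx0 hx1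
  have h3 : v3 ∈ C1 := not_not.1 (mt h03C1.2 h0)
  by_cases hx : x ∈ C1
  · -- `x` lies on the path from `v1`, so it is off the path from `v0`
    have hC0 : ∀ {u}, u ∈ C0 → v0 ∈ altComponent σ τ s(v0, v1) s(v2, v3) u := fun hu =>
      mem_altComponent_comm hσ.1 hτ.1 h01 h23 (by simpa only [C0, Sym2.eq_swap] using hu)
    have h1 : v1 ∉ C0 := fun h => h0 (hC0 h)
    obtain ⟨q, hq, hq1, hqx⟩ := exists_isPairing_of_notMem_altComponent hσ hτ h10 h32 a12.symm
      h1 h3C0 (not_not.1 (mt h12C0.2 h1))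
    exact ⟨q, hq, fun h => d02 (by rw [← hq1, ← h, hq.1]),
      hqx x (fun h => h0 (ReflTransGen.trans hx (hC0 h))) hx1⟩
  · obtain ⟨q, hq, hq0, hqx⟩ :=
      exists_isPairing_of_notMem_altComponent hσ hτ h01 h23 a30 h0 h2C1 h3
    exact ⟨q, hq, hq0 ▸ d13.symm, hqx x hx hx0⟩

theorem removableEdge_of_is4Cycle [Finite V] (hMC : MatchingCovered H) (hbip : BipartiteGraph H)
    (hQ : Is4Cycle H v0 v1 v2 v3)
    (hadm : ∃ M : (H.deleteEdges {s(v0, v1)}).Subgraph,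
      M.IsPerfectMatching ∧ s(v2, v3) ∈ M.edgeSet) :
    RemovableEdge H s(v0, v1) := by
  have ⟨_, _, _, _, _, _, a01, _⟩ := hQ
  obtain ⟨A, B, hAB⟩ := hbip
  obtain ⟨M', hM', hfM'⟩ := hadm
  obtain ⟨τ, hτ, hτM'⟩ := hM'.exists_isPairing
  obtain ⟨hτH, hτ01⟩ := isPairing_deleteEdges_iff.1 hτ
  refine ⟨a01, hMC.1, hQ.connected_deleteEdges hMC.2.1, ?_⟩
  intro g hg
  induction g using Sym2.ind with | _ x y => ?_
  obtain ⟨hxyH, hxye⟩ := SimpleGraph.deleteEdges_adj.1 ((SimpleGraph.mem_edgeSet _).1 hg)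
  obtain ⟨N, hN, hxyN⟩ := hMC.2.2 s(x, y) hxyH
  obtain ⟨σ, hσ, hσN⟩ := hN.exists_isPairing
  obtain ⟨p, hp, hp01, hpx⟩ : ∃ p, IsPairing H p ∧ p v0 ≠ v1 ∧ p x = σ x := by
    by_cases h01 : σ v0 = v1
    · have hxe : x ≠ v0 ∧ x ≠ v1 := by
        rw [← (hσN x y).1 hxyN] at hxye
        have h10 : σ v1 = v0 := hσ.1.eq_iff.2 h01.symm
        constructor <;> rintro rfl <;> simp [h01, h10] at hxye
      exact exists_isPairing_ne_of_is4Cycle (fun _ _ => hAB.mem_iff_notMem_of_adj) hσ hτH hQ h01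
        ((hτM' v2 v3).1 hfM') hτ01 hxe.1 hxe.2
    · exact ⟨σ, hσ, h01, rfl⟩
  obtain ⟨M, hM, hMp⟩ := (isPairing_deleteEdges_iff.2 ⟨hp, hp01⟩).exists_isPerfectMatching
  exact ⟨M, hM, (hMp x y).2 (hpx.trans ((hσN x y).1 hxyN))⟩

end Quadrilateral

/-- in a quadrilateral, if an opposite edge is admissible after
deleting `e`, then `e` is removable. -/
theorem stmt11 {V : Type*} [Fintype V] (H : SimpleGraph V)
    (hMC : MatchingCovered H) (hbip : BipartiteGraph H)
    (v0 v1 v2 v3 : V) (hQ : Is4Cycle H v0 v1 v2 v3)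
    (e f : Sym2 V)
    (he : e ∈ ({s(v0, v1), s(v1, v2), s(v2, v3), s(v3, v0)} : Set (Sym2 V)))
    (hf : f ∈ ({s(v0, v1), s(v1, v2), s(v2, v3), s(v3, v0)} : Set (Sym2 V)))
    (hdisj : ∀ x : V, x ∈ e → x ∉ f)
    (hadm : ∃ M : (H.deleteEdges {e}).Subgraph,
      M.IsPerfectMatching ∧ f ∈ M.edgeSet) :
    RemovableEdge H e := by
  have hQ1 := hQ.rotate
  have hQ2 := hQ1.rotate
  have hQ3 := hQ2.rotate
  simp only [Set.mem_insert_iff, Set.mem_singleton_iff] at he hf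
  rcases he with rfl | rfl | rfl | rfl <;> rcases hf with rfl | rfl | rfl | rfl
  all_goals first
    | exact removableEdge_of_is4Cycle hMC hbip hQ hadm
    | exact removableEdge_of_is4Cycle hMC hbip hQ1 hadm
    | exact removableEdge_of_is4Cycle hMC hbip hQ2 hadm
    | exact removableEdge_of_is4Cycle hMC hbip hQ3 hadm
    | simp at hdisj
end

section
/- Let H be a simple bipartite matching covered graph and let e be a removable edge of H. If f is a removable edge of the matching covered graph H − e, then: (i) f is a removable edge of H, and (ii) e is a removable edge of H − f. -/
/-! Everything except `e` lying in a perfect matching of `H − f` is inherited from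
`G := (H − e) − f = (H − f) − e`, a spanning subgraph of `H − f`. Let `A`, `B` be colour
classes of `H` and `e = xy` with `x ∈ A`, `y ∈ B`. As `G` is matching covered, every nonempty
`S ⊆ A` avoiding `x` has `|N_G(S)| > |S|`: otherwise a perfect matching through an edge leaving
`S ∪ N_G(S)` (which exists by connectivity) would match `S` into fewer than `|S|` vertices.
This surplus is Hall's condition for `G − x − y`, whose perfect matchings together with `xy`
are the required ones. -/

section

open SimpleGraph

variable {V : Type*}

theorem BipartitionOf.isBipartiteWith {G : SimpleGraph V} {A B : Set V}
    (h : BipartitionOf G A B) : G.IsBipartiteWith A B where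
  disjoint := h.2.1
  mem_of_adj u v huv := by
    have hu : u ∈ A ∪ B := h.1 ▸ Set.mem_univ u
    have hv : v ∈ A ∪ B := h.1 ▸ Set.mem_univ v
    have := h.2.2 huv
    have := Set.disjoint_left.mp h.2.1
    grind

theorem BipartitionOf.mono {G G' : SimpleGraph V} {A B : Set V} (hle : G' ≤ G)
    (h : BipartitionOf G A B) : BipartitionOf G' A B :=
  ⟨h.1, h.2.1, fun _ _ huv => h.2.2 (hle huv)⟩

theorem BipartiteGraph.mono {G G' : SimpleGraph V} (hle : G' ≤ G) (h : BipartiteGraph G) :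
    BipartiteGraph G' :=
  let ⟨A, B, hAB⟩ := h
  ⟨A, B, hAB.mono hle⟩

namespace SimpleGraph.Subgraph.IsPerfectMatching

variable {G G' : SimpleGraph V} {M : G.Subgraph}

theorem ncard_le [Finite V] (hM : M.IsPerfectMatching) {s t : Set V}
    (hst : ∀ a ∈ s, ∀ b, M.Adj a b → b ∈ t) : s.ncard ≤ t.ncard := by
  choose mate hmate using fun v => isPerfectMatching_iff.mp hM v
  refine Set.ncard_le_ncard_of_injOn mate (fun a ha => hst a ha _ (hmate a).1) ?_
  intro a _ b _ hab
  exact hM.1.eq_of_adj_right (hmate a).1 (hab ▸ (hmate b).1)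

theorem map_ofLE (hM : M.IsPerfectMatching) (h : G ≤ G') :
    (M.map (Hom.ofLE h)).IsPerfectMatching :=
  ⟨hM.1.map_ofLE h, fun v => ⟨v, hM.2 v, rfl⟩⟩

end SimpleGraph.Subgraph.IsPerfectMatching

theorem MatchingCovered.ncard_lt_ncard_neighborSet [Finite V] {G : SimpleGraph V}
    {A B : Set V} (hmc : MatchingCovered G) (hG : G.IsBipartiteWith A B) {s : Set V}
    (hs : s.Nonempty) (hsA : s ⊆ A) {x : V} (hx : x ∈ A) (hxs : x ∉ s) :
    s.ncard < (⋃ v ∈ s, G.neighborSet v).ncard := by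
  set N := ⋃ v ∈ s, G.neighborSet v
  have hNB : N ⊆ B :=
    Set.iUnion₂_subset fun v hv => isBipartiteWith_neighborSet_subset hG (hsA hv)
  by_contra! hle
  obtain ⟨a, ha⟩ := hs
  obtain ⟨p⟩ := hmc.2.1.preconnected a x
  have hxN : x ∉ s ∪ N := by
    rintro (h | h)
    exacts [hxs h, Set.disjoint_left.mp hG.disjoint hx (hNB h)]
  obtain ⟨d, -, hd, hd'⟩ := p.exists_boundary_dart (s ∪ N) (Or.inl ha) hxN
  have hdN : d.fst ∈ N := by
    refine hd.resolve_left fun h => hd' (Or.inr ?_)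
    exact Set.mem_biUnion h d.adj
  have hds : d.snd ∉ s := fun h => hd' (Or.inl h)
  -- a perfect matching through the edge `d` leaving `s ∪ N` matches `s` into `N \ {d.fst}`
  obtain ⟨M, hM, hdM⟩ := hmc.2.2 s(d.fst, d.snd) d.adj
  rw [Subgraph.mem_edgeSet] at hdM
  have : s.ncard ≤ (N \ {d.fst}).ncard := by
    refine hM.ncard_le fun a ha b hab => ⟨Set.mem_biUnion ha (M.adj_sub hab), ?_⟩
    rintro rfl
    exact hds (hM.1.eq_of_adj_left hab.symm hdM ▸ ha)
  have := Set.ncard_sdiff_singleton_lt_of_mem hdN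
  omega

namespace SimpleGraph

variable {G : SimpleGraph V} {A B : Set V} {x y : V}

/-- Its perfect matchings are the perfect matchings of `G ⊔ edge x y` that contain `xy`. -/
def forceEdge (G : SimpleGraph V) (x y : V) : SimpleGraph V :=
  (G.deleteIncidenceSet x).deleteIncidenceSet y ⊔ edge x y

theorem forceEdge_adj {u v : V} : (G.forceEdge x y).Adj u v ↔
    G.Adj u v ∧ u ≠ x ∧ v ≠ x ∧ u ≠ y ∧ v ≠ y ∨ (u = x ∧ v = y ∨ u = y ∧ v = x) ∧ u ≠ v := by
  simp only [forceEdge, sup_adj, deleteIncidenceSet_adj, edge_adj]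
  tauto

theorem forceEdge_comm : G.forceEdge x y = G.forceEdge y x := by
  rw [forceEdge, forceEdge, edge_comm]
  ext u v
  simp only [sup_adj, deleteIncidenceSet_adj]
  tauto

theorem forceEdge_le {G' : SimpleGraph V} (hle : G ≤ G') (hxy : G'.Adj x y) :
    G.forceEdge x y ≤ G' := by
  intro u v huv
  rcases forceEdge_adj.mp huv with h | ⟨⟨rfl, rfl⟩ | ⟨rfl, rfl⟩, -⟩
  exacts [hle h.1, hxy, hxy.symm]

theorem eq_of_forceEdge_adj {v : V} (h : (G.forceEdge x y).Adj x v) : v = y := by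
  rw [forceEdge_adj] at h
  tauto

theorem IsBipartiteWith.forceEdge (hG : G.IsBipartiteWith A B) (hx : x ∈ A) (hy : y ∈ B) :
    (G.forceEdge x y).IsBipartiteWith A B where
  disjoint := hG.disjoint
  mem_of_adj u v huv := by
    rcases forceEdge_adj.mp huv with h | ⟨⟨rfl, rfl⟩ | ⟨rfl, rfl⟩, -⟩
    exacts [hG.mem_of_adj h.1, Or.inl ⟨hx, hy⟩, Or.inr ⟨hy, hx⟩]

theorem IsBipartiteWith.ncard_le_ncard_neighborSet [Finite V] (hG : G.IsBipartiteWith A B)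
    (hcover : A ∪ B = Set.univ)
    (hA : ∀ s ⊆ A, s.ncard ≤ (⋃ v ∈ s, G.neighborSet v).ncard)
    (hB : ∀ s ⊆ B, s.ncard ≤ (⋃ v ∈ s, G.neighborSet v).ncard) (s : Set V) :
    s.ncard ≤ (⋃ v ∈ s, G.neighborSet v).ncard := by
  have hdisj : Disjoint (⋃ v ∈ s ∩ A, G.neighborSet v) (⋃ v ∈ s ∩ B, G.neighborSet v) :=
    hG.disjoint.symm.mono
      (Set.iUnion₂_subset fun v hv => isBipartiteWith_neighborSet_subset hG hv.2)
      (Set.iUnion₂_subset fun v hv => isBipartiteWith_neighborSet_subset hG.symm hv.2)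
  calc s.ncard = (s ∩ A ∪ s ∩ B).ncard := by rw [← Set.inter_union_distrib_left, hcover,
        Set.inter_univ]
    _ ≤ (s ∩ A).ncard + (s ∩ B).ncard := Set.ncard_union_le _ _
    _ ≤ (⋃ v ∈ s ∩ A, G.neighborSet v).ncard + (⋃ v ∈ s ∩ B, G.neighborSet v).ncard :=
        add_le_add (hA _ Set.inter_subset_right) (hB _ Set.inter_subset_right)
    _ = (⋃ v ∈ s ∩ A ∪ s ∩ B, G.neighborSet v).ncard := by
        rw [Set.biUnion_union, Set.ncard_union_eq hdisj]
    _ ≤ (⋃ v ∈ s, G.neighborSet v).ncard :=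
        Set.ncard_le_ncard (Set.biUnion_subset_biUnion_left (by simp))

end SimpleGraph

theorem MatchingCovered.ncard_le_ncard_neighborSet_forceEdge [Finite V] {G : SimpleGraph V}
    {A B : Set V} (hmc : MatchingCovered G) (hG : G.IsBipartiteWith A B) {x y : V}
    (hx : x ∈ A) (hy : y ∈ B) {s : Set V} (hsA : s ⊆ A) :
    s.ncard ≤ (⋃ v ∈ s, (G.forceEdge x y).neighborSet v).ncard := by
  set N := (⋃ v ∈ s \ {x}, G.neighborSet v) \ {y}
  have hxy : x ≠ y := fun h => Set.disjoint_left.mp hG.disjoint hx (h ▸ hy)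
  have hN : (s \ {x}).ncard ≤ N.ncard := by
    rcases (s \ {x}).eq_empty_or_nonempty with h | h
    · simp [h]
    · have := hmc.ncard_lt_ncard_neighborSet hG h (Set.sdiff_subset.trans hsA) hx (by simp)
      have : _ - 1 ≤ N.ncard := Set.pred_ncard_le_ncard_sdiff_singleton _ y
      omega
  have hNsub : N ⊆ ⋃ v ∈ s, (G.forceEdge x y).neighborSet v := by
    rintro w ⟨hw, hwy⟩
    obtain ⟨v, ⟨hvs, hvx⟩, hvw⟩ := Set.mem_iUnion₂.mp hw
    have hvA := hsA hvs
    have hwB := isBipartiteWith_neighborSet_subset hG hvA hvw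
    have := Set.disjoint_left.mp hG.disjoint
    refine Set.mem_biUnion hvs (forceEdge_adj.mpr (Or.inl ⟨hvw, hvx, ?_, ?_, hwy⟩))
    · rintro rfl; exact this hx hwB
    · rintro rfl; exact this hvA hy
  by_cases hxs : x ∈ s
  · have hyN : y ∉ N := fun h => h.2 rfl
    calc s.ncard = (s \ {x}).ncard + 1 := (Set.ncard_sdiff_singleton_add_one hxs).symm
      _ ≤ N.ncard + 1 := by omega
      _ = (insert y N).ncard := (Set.ncard_insert_of_notMem hyN).symm
      _ ≤ _ := Set.ncard_le_ncard (Set.insert_subset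
          (Set.mem_biUnion hxs (forceEdge_adj.mpr (Or.inr ⟨Or.inl ⟨rfl, rfl⟩, hxy⟩))) hNsub)
  · rw [Set.sdiff_singleton_eq_self hxs] at hN
    exact hN.trans (Set.ncard_le_ncard hNsub)

theorem MatchingCovered.exists_isPerfectMatching_adj_of_le [Finite V] {G G' : SimpleGraph V}
    {A B : Set V} (hmc : MatchingCovered G) (hG : G.IsBipartiteWith A B)
    (hcover : A ∪ B = Set.univ) (hle : G ≤ G') {x y : V} (hx : x ∈ A) (hy : y ∈ B)
    (hxy : G'.Adj x y) : ∃ M : G'.Subgraph, M.IsPerfectMatching ∧ M.Adj x y := by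
  have := Fintype.ofFinite V
  classical
  have hF := hG.forceEdge hx hy
  have hall := hF.ncard_le_ncard_neighborSet hcover
    (fun _ => hmc.ncard_le_ncard_neighborSet_forceEdge hG hx hy)
    (fun _ => forceEdge_comm (G := G) ▸ hmc.ncard_le_ncard_neighborSet_forceEdge hG.symm hy hx)
  obtain ⟨M, hM⟩ := exists_isPerfectMatching_of_forall_ncard_le hF hall
  obtain ⟨v, hxv, -⟩ := hM.1 (hM.2 x)
  obtain rfl := eq_of_forceEdge_adj (M.adj_sub hxv)
  exact ⟨_, hM.map_ofLE (forceEdge_le hle hxy), x, v, hxv, rfl, rfl⟩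

theorem MatchingCovered.of_deleteEdges_singleton [Finite V] {G : SimpleGraph V}
    (hG : BipartiteGraph G) {e : Sym2 V} (h : MatchingCovered (G.deleteEdges {e})) :
    MatchingCovered G := by
  obtain ⟨A, B, hAB⟩ := hG
  refine ⟨h.1, h.2.1.mono (deleteEdges_le _), fun g hg => ?_⟩
  by_cases hge : g = e
  · subst hge
    obtain ⟨x, y⟩ := g
    have hbip := (hAB.mono (deleteEdges_le {s(x, y)})).isBipartiteWith
    rcases hAB.isBipartiteWith.mem_of_adj hg with ⟨hx, hy⟩ | ⟨hx, hy⟩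
    · exact h.exists_isPerfectMatching_adj_of_le hbip hAB.1 (deleteEdges_le _) hx hy hg
    · exact h.exists_isPerfectMatching_adj_of_le hbip.symm (Set.union_comm A B ▸ hAB.1)
        (deleteEdges_le _) hx hy hg
  · obtain ⟨M, hM, hgM⟩ := h.2.2 g (by rw [edgeSet_deleteEdges]; exact ⟨hg, hge⟩)
    refine ⟨_, hM.map_ofLE (deleteEdges_le _), ?_⟩
    rw [Subgraph.edgeSet_map]
    exact ⟨g, hgM, by simp⟩

end

theorem stmt12_general {V : Type*} [Fintype V] (H : SimpleGraph V)
    (hbip : BipartiteGraph H)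
    (e : Sym2 V) (he : RemovableEdge H e)
    (f : Sym2 V) (hf : RemovableEdge (H.deleteEdges {e}) f) :
    RemovableEdge H f ∧ RemovableEdge (H.deleteEdges {f}) e := by
  obtain ⟨heH, -⟩ := he
  obtain ⟨hfHe, hHef⟩ := hf
  rw [SimpleGraph.edgeSet_deleteEdges] at hfHe
  obtain ⟨hfH, hfe⟩ := hfHe
  have hcomm : (H.deleteEdges {e}).deleteEdges {f} = (H.deleteEdges {f}).deleteEdges {e} := by
    rw [SimpleGraph.deleteEdges_deleteEdges, SimpleGraph.deleteEdges_deleteEdges, Set.union_comm]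
  rw [hcomm] at hHef
  have heHf : e ∈ (H.deleteEdges {f}).edgeSet := by
    rw [SimpleGraph.edgeSet_deleteEdges]
    exact ⟨heH, fun h => hfe (h ▸ rfl)⟩
  have hHf : BipartiteGraph (H.deleteEdges {f}) := hbip.mono (SimpleGraph.deleteEdges_le _)
  exact ⟨⟨hfH, MatchingCovered.of_deleteEdges_singleton hHf hHef⟩, heHf, hHef⟩

/-- the exchange property of removable edges in bipartite
matching covered graphs. -/
theorem stmt12 {V : Type*} [Fintype V] (H : SimpleGraph V)
    (hMC : MatchingCovered H) (hbip : BipartiteGraph H)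
    (e : Sym2 V) (he : RemovableEdge H e)
    (f : Sym2 V) (hf : RemovableEdge (H.deleteEdges {e}) f) :
    RemovableEdge H f ∧ RemovableEdge (H.deleteEdges {f}) e :=
  stmt12_general H hbip e he f hf
end

section
/- Let H be a simple bipartite graph on at least four vertices with color classes A and B satisfying |A| = |B|. Then the following statements are equivalent: (i) H is matching covered; (ii) |N(S)| ≥ |S| + 1 for every nonempty proper subset S of A; (iii) H − {a, b} has a perfect matching for every pair of vertices a ∈ A and b ∈ B. -/
/-!
For `S ⊆ A`, a perfect matching of `H`, or of `H - {a, b}` with `a ∉ S`, maps `S` injectively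
into `N(S)`, respectively into `N(S) \ {b}`. The second case gives (iii) ⇒ (ii). The first shows
that if `|N(S)| = |S|`, every perfect matching pairs `N(S)` with `S`, so an edge from `N(S)` to
`A \ S`, which exists by connectivity, lies in no perfect matching: (i) ⇒ (ii). Conversely, under
(ii) Hall's condition survives the deletion of any `a ∈ A` and `b ∈ B`, which gives (iii), and
adding the edge `ab` to a perfect matching of `H - {a, b}` covers `ab`. Connectivity also follows
from (ii): if a component met `A` in a nonempty proper subset, that subset and its complement in
`A` would together have more than `|B|` neighbours.
-/

open Function Set

namespace SimpleGraph

variable {V : Type*} {H : SimpleGraph V}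

def nbhd (H : SimpleGraph V) (S : Set V) : Set V := {v | ∃ x ∈ S, H.Adj x v}

/-- The surplus of `S` is `|N(S)| - |S|`. -/
def PositiveSurplus (H : SimpleGraph V) (A : Set V) : Prop :=
  ∀ S : Set V, S ⊆ A → S.Nonempty → S ≠ A → S.ncard + 1 ≤ (H.nbhd S).ncard

lemma Subgraph.IsPerfectMatching.exists_injective_adj {W : Type*} {G : SimpleGraph W}
    {M : G.Subgraph} (hM : M.IsPerfectMatching) :
    ∃ g : W → W, Injective g ∧ ∀ v, M.Adj v (g v) := by
  choose g hg using fun v => (Subgraph.isPerfectMatching_iff.mp hM v).exists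
  exact ⟨g, fun u v huv => hM.1.eq_of_adj_right (hg u) (huv ▸ hg v), hg⟩

lemma ncard_le_ncard_nbhd_inter_of_hasPerfMatching_induce [Finite V] {C S : Set V}
    (hC : HasPerfMatching (H.induce C)) (hS : S ⊆ C) : S.ncard ≤ (H.nbhd S ∩ C).ncard := by
  classical
  obtain ⟨M, hM⟩ := hC
  obtain ⟨g, hg, hadj⟩ := hM.exists_injective_adj
  let g' : V → V := fun v => if hv : v ∈ C then g ⟨v, hv⟩ else v
  refine ncard_le_ncard_of_injOn g' (fun v hv => ?_) (fun u hu v hv huv => ?_)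
  · simp only [g', dif_pos (hS hv)]
    exact ⟨⟨v, hv, M.adj_sub (hadj ⟨v, hS hv⟩)⟩, (g _).2⟩
  · simp only [g', dif_pos (hS hu), dif_pos (hS hv)] at huv
    exact congrArg Subtype.val (hg (Subtype.ext huv))

lemma Subgraph.IsPerfectMatching.mem_of_adj_of_ncard_nbhd_le [Finite V] {M : H.Subgraph}
    (hM : M.IsPerfectMatching) {S : Set V} (hN : (H.nbhd S).ncard ≤ S.ncard) {f q : V}
    (hf : f ∈ H.nbhd S) (hfq : M.Adj f q) : q ∈ S := by
  obtain ⟨g, hg, hadj⟩ := hM.exists_injective_adj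
  have himage : g '' S ⊆ H.nbhd S := by
    rintro _ ⟨s, hs, rfl⟩
    exact ⟨s, hs, M.adj_sub (hadj s)⟩
  have heq : g '' S = H.nbhd S :=
    eq_of_subset_of_ncard_le himage (by rwa [ncard_image_of_injective S hg])
  obtain ⟨s, hs, rfl⟩ := heq ▸ hf
  exact hM.1.eq_of_adj_left hfq (hadj s).symm ▸ hs

lemma Preconnected.exists_mem_nbhd_adj_notMem (hH : H.Preconnected) {S : Set V} {x z : V}
    (hx : x ∈ S) (hz : z ∉ S ∪ H.nbhd S) : ∃ f ∈ H.nbhd S, ∃ q ∉ S, H.Adj f q := by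
  obtain ⟨p⟩ := hH x z
  obtain ⟨d, -, hfst, hsnd⟩ := p.exists_boundary_dart _ (Or.inl hx) hz
  rcases hfst with hfst | hfst
  · exact absurd (Or.inr ⟨_, hfst, d.adj⟩) hsnd
  · exact ⟨_, hfst, _, fun h => hsnd (Or.inl h), d.adj⟩

lemma _root_.MatchingCovered.ncard_lt_ncard_nbhd [Finite V] (hH : MatchingCovered H)
    {S : Set V} {x z : V} (hx : x ∈ S) (hz : z ∉ S ∪ H.nbhd S) :
    S.ncard < (H.nbhd S).ncard := by
  by_contra! hN
  obtain ⟨f, hf, q, hq, hfq⟩ := hH.2.1.preconnected.exists_mem_nbhd_adj_notMem hx hz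
  obtain ⟨M, hM, hfqM⟩ := hH.2.2 s(f, q) hfq
  exact hq (hM.mem_of_adj_of_ncard_nbhd_le hN hf hfqM)

lemma exists_isMatching_verts_eq_union_of_hall [Finite V] {X Y : Set V} (hXY : Disjoint X Y)
    (hcard : X.ncard = Y.ncard) (hhall : ∀ S ⊆ X, S.ncard ≤ (H.nbhd S ∩ Y).ncard) :
    ∃ M : H.Subgraph, M.verts = X ∪ Y ∧ M.IsMatching := by
  classical
  have := Fintype.ofFinite V
  obtain ⟨f, hf, hadj⟩ := (Fintype.all_card_le_filter_rel_iff_exists_injective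
    (fun (x : X) (y : Y) => H.Adj x y)).mp fun T => by
      have h := hhall (Subtype.val '' (T : Set X)) (by simp)
      rw [ncard_image_of_injective _ Subtype.val_injective, ncard_coe_finset] at h
      refine h.trans_eq ?_
      rw [← ncard_coe_finset, ← ncard_image_of_injective _ Subtype.val_injective]
      congr 1
      ext v
      simp [nbhd]
  have hbij : Bijective f :=
    hf.bijective_of_nat_card_le (by rw [Nat.card_coe_set_eq, Nat.card_coe_set_eq, hcard])
  exact Subgraph.IsMatching.exists_of_disjoint_sets_of_equiv hXY (Equiv.ofBijective f hbij) hadj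

lemma Subgraph.IsMatching.hasPerfMatching_induce_verts {M : H.Subgraph} (hM : M.IsMatching) :
    HasPerfMatching (H.induce M.verts) := by
  refine ⟨M.comap (Embedding.induce M.verts).toHom, fun v _ => ?_, fun v => by simp⟩
  obtain ⟨w, hvw, hw⟩ := hM v.2
  exact ⟨⟨w, M.edge_vert hvw.symm⟩, ⟨M.adj_sub hvw, hvw⟩,
    fun y hy => Subtype.ext (hw y hy.2)⟩

lemma Subgraph.IsMatching.isPerfectMatching_sup_subgraphOfAdj {M : H.Subgraph}
    (hM : M.IsMatching) {x y : V} (hverts : M.verts = {x, y}ᶜ) (hxy : H.Adj x y) :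
    (M ⊔ H.subgraphOfAdj hxy).IsPerfectMatching := by
  refine ⟨hM.sup (.subgraphOfAdj hxy) ?_, fun v => ?_⟩
  · rw [hM.support_eq_verts, (IsMatching.subgraphOfAdj hxy).support_eq_verts, hverts,
      subgraphOfAdj_verts]
    exact disjoint_compl_left
  · rw [Subgraph.verts_sup, hverts, subgraphOfAdj_verts, compl_union_self]
    trivial

end SimpleGraph

namespace BipartitionOf

open SimpleGraph

variable {V : Type*} {H : SimpleGraph V} {A B : Set V}

lemma mem_or_mem (hbip : BipartitionOf H A B) (v : V) : v ∈ A ∨ v ∈ B :=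
  (hbip.1 ▸ mem_univ v : v ∈ A ∪ B)

lemma notMem_right (hbip : BipartitionOf H A B) {v : V} (hv : v ∈ A) : v ∉ B :=
  disjoint_left.mp hbip.2.1 hv

lemma mem_right_of_adj (hbip : BipartitionOf H A B) {u v : V} (huv : H.Adj u v) (hu : u ∈ A) :
    v ∈ B :=
  (hbip.2.2 huv).mp hu

lemma mem_left_of_adj (hbip : BipartitionOf H A B) {u v : V} (huv : H.Adj u v) (hu : u ∈ B) :
    v ∈ A :=
  (hbip.mem_or_mem v).resolve_right fun hv => hbip.notMem_right ((hbip.2.2 huv).mpr hv) hu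

lemma nbhd_subset_right (hbip : BipartitionOf H A B) {S : Set V} (hS : S ⊆ A) :
    H.nbhd S ⊆ B := by
  rintro v ⟨x, hx, hxv⟩
  exact hbip.mem_right_of_adj hxv (hS hx)

variable [Finite V]

lemma ncard_add_ncard (hbip : BipartitionOf H A B) : A.ncard + B.ncard = Nat.card V := by
  rw [← ncard_union_eq hbip.2.1, hbip.1, ncard_univ]

lemma positiveSurplus_of_matchingCovered (hbip : BipartitionOf H A B)
    (hH : MatchingCovered H) : H.PositiveSurplus A := by
  intro S hSA ⟨x, hx⟩ hSA'
  obtain ⟨z, hzA, hzS⟩ := exists_of_ssubset (hSA.ssubset_of_ne hSA')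
  exact hH.ncard_lt_ncard_nbhd hx fun hz =>
    hz.elim hzS fun hzN => hbip.notMem_right hzA (hbip.nbhd_subset_right hSA hzN)

lemma exists_isMatching_verts_eq_compl_pair (hbip : BipartitionOf H A B)
    (hAB : A.ncard = B.ncard) (hH : H.PositiveSurplus A) {a b : V} (ha : a ∈ A) (hb : b ∈ B) :
    ∃ M : H.Subgraph, M.verts = {a, b}ᶜ ∧ M.IsMatching := by
  have hverts : A \ {a} ∪ B \ {b} = {a, b}ᶜ := by
    ext v
    have := hbip.mem_or_mem v
    have : v ∈ A → v ∉ B := hbip.notMem_right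
    simp only [mem_union, mem_sdiff, mem_singleton_iff, mem_compl_iff, mem_insert_iff]
    grind
  rw [← hverts]
  refine exists_isMatching_verts_eq_union_of_hall (hbip.2.1.mono sdiff_subset sdiff_subset)
    (by rw [ncard_sdiff_singleton_of_mem ha, ncard_sdiff_singleton_of_mem hb, hAB])
    fun S hS => ?_
  rcases S.eq_empty_or_nonempty with rfl | hSne
  · simp
  have hSA : S ⊆ A := hS.trans sdiff_subset
  have hsurplus := hH S hSA hSne fun h => (hS (h ▸ ha)).2 rfl
  have hN : H.nbhd S ⊆ H.nbhd S ∩ (B \ {b}) ∪ {b} := fun v hv => by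
    by_cases hvb : v = b
    · exact Or.inr hvb
    · exact Or.inl ⟨hv, hbip.nbhd_subset_right hSA hv, hvb⟩
  have := (ncard_le_ncard hN).trans (ncard_union_le _ _)
  rw [ncard_singleton] at this
  omega

lemma forall_hasPerfMatching_induce_of_positiveSurplus (hbip : BipartitionOf H A B)
    (hAB : A.ncard = B.ncard) (hH : H.PositiveSurplus A) :
    ∀ a ∈ A, ∀ b ∈ B, HasPerfMatching (H.induce ({a, b} : Set V)ᶜ) := by
  intro a ha b hb
  obtain ⟨M, hverts, hM⟩ := hbip.exists_isMatching_verts_eq_compl_pair hAB hH ha hb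
  exact hverts ▸ hM.hasPerfMatching_induce_verts

lemma positiveSurplus_of_forall_hasPerfMatching_induce (hbip : BipartitionOf H A B)
    (hAB : A.ncard = B.ncard)
    (hH : ∀ a ∈ A, ∀ b ∈ B, HasPerfMatching (H.induce ({a, b} : Set V)ᶜ)) :
    H.PositiveSurplus A := by
  intro S hSA hSne hSA'
  obtain ⟨a, haA, haS⟩ := exists_of_ssubset (hSA.ssubset_of_ne hSA')
  have hS : ∀ b ∈ B, S ⊆ {a, b}ᶜ := fun b hb s hs => by
    simp only [mem_compl_iff, mem_insert_iff, mem_singleton_iff, not_or]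
    exact ⟨ne_of_mem_of_not_mem hs haS, fun h => hbip.notMem_right (hSA hs) (h ▸ hb)⟩
  have hSpos := (ncard_pos).mpr hSne
  obtain ⟨b, hbN⟩ : (H.nbhd S).Nonempty := by
    obtain ⟨b₀, hb₀⟩ : B.Nonempty :=
      nonempty_of_ncard_ne_zero (hAB ▸ ((ncard_pos).mpr (hSne.mono hSA)).ne')
    have :=
      ncard_le_ncard_nbhd_inter_of_hasPerfMatching_induce (hH a haA b₀ hb₀) (hS b₀ hb₀)
    exact (nonempty_of_ncard_ne_zero (s := H.nbhd S ∩ {a, b₀}ᶜ) (by omega)).mono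
      inter_subset_left
  have hb := hbip.nbhd_subset_right hSA hbN
  have h₁ := ncard_le_ncard_nbhd_inter_of_hasPerfMatching_induce (hH a haA b hb) (hS b hb)
  have h₂ : H.nbhd S ∩ {a, b}ᶜ ⊆ H.nbhd S \ {b} :=
    fun v hv => ⟨hv.1, fun h => hv.2 (by simp_all)⟩
  have h₃ := ncard_le_ncard h₂
  rw [ncard_sdiff_singleton_of_mem hbN] at h₃
  have := (ncard_pos).mpr ⟨b, hbN⟩
  omega

lemma exists_adj_of_mem_right (hbip : BipartitionOf H A B) (hAB : A.ncard = B.ncard)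
    (hA : 2 ≤ A.ncard) (hH : H.PositiveSurplus A) {b : V} (hb : b ∈ B) :
    ∃ a ∈ A, H.Adj a b := by
  obtain ⟨a, ha⟩ := nonempty_of_ncard_ne_zero (by omega : A.ncard ≠ 0)
  have hcard := ncard_sdiff_singleton_of_mem ha
  have hsurplus := hH (A \ {a}) sdiff_subset (nonempty_of_ncard_ne_zero (by omega))
    fun h => (h.symm ▸ ha : a ∈ A \ {a}).2 rfl
  have hN : H.nbhd (A \ {a}) = B :=
    eq_of_subset_of_ncard_le (hbip.nbhd_subset_right sdiff_subset) (by omega)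
  obtain ⟨x, hx, hxb⟩ := hN.symm ▸ hb
  exact ⟨x, hx.1, hxb⟩

lemma subset_reachable_of_mem_left (hbip : BipartitionOf H A B) (hAB : A.ncard = B.ncard)
    (hH : H.PositiveSurplus A) {a : V} (ha : a ∈ A) : A ⊆ {v | H.Reachable a v} := by
  set X := {v | H.Reachable a v}
  by_contra hAX
  obtain ⟨a', ha'A, ha'X⟩ := not_subset.mp hAX
  have hclosed : ∀ {u v}, H.Adj u v → (u ∈ X ↔ v ∈ X) := fun huv =>
    ⟨fun hu => hu.trans huv.reachable, fun hv => hv.trans huv.symm.reachable⟩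
  have hN₁ : H.nbhd (A ∩ X) ⊆ B ∩ X := by
    rintro v ⟨x, hx, hxv⟩
    exact ⟨hbip.mem_right_of_adj hxv hx.1, (hclosed hxv).mp hx.2⟩
  have hN₂ : H.nbhd (A \ X) ⊆ B \ X := by
    rintro v ⟨x, hx, hxv⟩
    exact ⟨hbip.mem_right_of_adj hxv hx.1, fun hv => hx.2 ((hclosed hxv).mpr hv)⟩
  have h₁ := hH (A ∩ X) inter_subset_left ⟨a, ha, .refl a⟩ fun h => ha'X (h.symm ▸ ha'A).2
  have h₂ := hH (A \ X) sdiff_subset ⟨a', ha'A, ha'X⟩ fun h => (h.symm ▸ ha).2 (.refl a)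
  have := ncard_le_ncard hN₁
  have := ncard_le_ncard hN₂
  have := ncard_inter_add_ncard_sdiff_eq_ncard A X
  have := ncard_inter_add_ncard_sdiff_eq_ncard B X
  omega

lemma connected_of_positiveSurplus (hbip : BipartitionOf H A B) (hAB : A.ncard = B.ncard)
    (hA : 2 ≤ A.ncard) (hH : H.PositiveSurplus A) : H.Connected := by
  obtain ⟨a, ha⟩ := nonempty_of_ncard_ne_zero (by omega : A.ncard ≠ 0)
  refine (connected_iff_exists_forall_reachable H).mpr ⟨a, fun v => ?_⟩
  rcases hbip.mem_or_mem v with hv | hv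
  · exact hbip.subset_reachable_of_mem_left hAB hH ha hv
  · obtain ⟨x, hx, hxv⟩ := hbip.exists_adj_of_mem_right hAB hA hH hv
    exact (hbip.subset_reachable_of_mem_left hAB hH ha hx).trans hxv.reachable

lemma matchingCovered_of_positiveSurplus (hbip : BipartitionOf H A B) (hAB : A.ncard = B.ncard)
    (hA : 2 ≤ A.ncard) (hH : H.PositiveSurplus A) : MatchingCovered H := by
  have hcard := hbip.ncard_add_ncard
  refine ⟨by omega, hbip.connected_of_positiveSurplus hAB hA hH, ?_⟩
  have hedge : ∀ x ∈ A, ∀ y, H.Adj x y →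
      ∃ M : H.Subgraph, M.IsPerfectMatching ∧ s(x, y) ∈ M.edgeSet := by
    intro x hx y hxy
    obtain ⟨M, hverts, hM⟩ :=
      hbip.exists_isMatching_verts_eq_compl_pair hAB hH hx (hbip.mem_right_of_adj hxy hx)
    exact ⟨_, hM.isPerfectMatching_sup_subgraphOfAdj hverts hxy, Or.inr (by simp)⟩
  rintro ⟨x, y⟩ (hxy : H.Adj x y)
  rcases hbip.mem_or_mem x with hx | hx
  · exact hedge x hx y hxy
  · simpa only [Sym2.eq_swap] using hedge y (hbip.mem_left_of_adj hxy hx) x hxy.symm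

end BipartitionOf

/-- characterizations of bipartite matching covered graphs. -/
theorem stmt14 {V : Type*} [Fintype V] (H : SimpleGraph V) (A B : Set V)
    (hbip : BipartitionOf H A B) (hAB : A.ncard = B.ncard)
    (hcard : 4 ≤ Nat.card V) :
    (MatchingCovered H ↔
      (∀ S : Set V, S ⊆ A → S.Nonempty → S ≠ A →
        S.ncard + 1 ≤ Set.ncard {v : V | ∃ x ∈ S, H.Adj x v})) ∧
    ((∀ S : Set V, S ⊆ A → S.Nonempty → S ≠ A →
        S.ncard + 1 ≤ Set.ncard {v : V | ∃ x ∈ S, H.Adj x v}) ↔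
      (∀ a ∈ A, ∀ b ∈ B, HasPerfMatching (H.induce (({a, b} : Set V)ᶜ)))) := by
  have hA : 2 ≤ A.ncard := by
    have := hbip.ncard_add_ncard
    omega
  exact ⟨⟨hbip.positiveSurplus_of_matchingCovered,
      hbip.matchingCovered_of_positiveSurplus hAB hA⟩,
    ⟨hbip.forall_hasPerfMatching_induce_of_positiveSurplus hAB,
      hbip.positiveSurplus_of_forall_hasPerfMatching_induce hAB⟩⟩
end
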